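/- arXiv:math/0005045 — 2 statements merged into one kernel-verified Lean document; each statement's English description precedes it below -/
import Mathlib

section
/- Suppose P_1,…,P_n ∈ K⟨n⟩ are homogeneous of common degree s ≥ 1 (i.e. N P_j = s·P_j for all j) and Σ_{j=1}^n X_j P_j lies in the cyclic subspace CK⟨n⟩. Then δ_k(Σ_{j=1}^n X_j P_j) = (s+1)·P_k for every k with 1 ≤ k ≤ n. -/
/-! Setup: the free associative algebra `K⟨X_1,…,X_n⟩` realized as the monoid
algebra of the free monoid on `Fin n`, together with the partial cyclic
derivatives `δ_j`, the number operator `N` and the cyclic symmetrization `C`. -/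

noncomputable section

/-- `K⟨n⟩`, the ring of polynomials in `n` noncommuting indeterminates. -/
abbrev FreePoly (K : Type) [CommSemiring K] (n : ℕ) : Type :=
  MonoidAlgebra K (FreeMonoid (Fin n))

/-- The monomial `X_{i_1} ⋯ X_{i_p}` associated to the word `w = [i_1,…,i_p]`. -/
def mono (K : Type) [Field K] {n : ℕ} (w : List (Fin n)) : FreePoly K n :=
  MonoidAlgebra.single (FreeMonoid.ofList w) 1

/-- The indeterminate `X k`. -/
def Xvar (K : Type) [Field K] {n : ℕ} (k : Fin n) : FreePoly K n := mono K [k]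

variable {K : Type} [Field K] [CharZero K] {n : ℕ}

/-- The partial cyclic derivative `δ_j = μ̃ ∘ ∂_j`: on a monomial
`X_{i_0} ⋯ X_{i_s}` it gives `∑_{p : i_p = j} X_{i_{p+1}} ⋯ X_{i_s} X_{i_0} ⋯ X_{i_{p-1}}`. -/
def cycDeriv (j : Fin n) : FreePoly K n →ₗ[K] FreePoly K n :=
  (Finsupp.lsum K fun w => LinearMap.toSpanSingleton K _
    (∑ p : Fin (FreeMonoid.toList w).length,
      if (FreeMonoid.toList w).get p = j then
        mono K ((FreeMonoid.toList w).drop (p + 1) ++ (FreeMonoid.toList w).take p)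
      else 0)) ∘ₗ (MonoidAlgebra.coeffLinearEquiv K).toLinearMap

/-- The number operator `N`, multiplying a monomial by its degree. -/
def numOp : FreePoly K n →ₗ[K] FreePoly K n :=
  (Finsupp.lsum K fun w => LinearMap.toSpanSingleton K _
    ((FreeMonoid.toList w).length • mono K (FreeMonoid.toList w))) ∘ₗ
    (MonoidAlgebra.coeffLinearEquiv K).toLinearMap

/-- The cyclic symmetrization `C`, sending a monomial of degree `p ≥ 1` to the
sum of its `p` cyclic rotations (and `1` to `0`). -/
def cycSym : FreePoly K n →ₗ[K] FreePoly K n :=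
  (Finsupp.lsum K fun w => LinearMap.toSpanSingleton K _
    (∑ p ∈ Finset.range (FreeMonoid.toList w).length,
      mono K ((FreeMonoid.toList w).rotate (p + 1)))) ∘ₗ
    (MonoidAlgebra.coeffLinearEquiv K).toLinearMap

/-! For a cyclic element `F = C G` one has the Euler identity `∑ⱼ Xⱼ δⱼ F = N F`: on a monomial
`u`, `∑ⱼ Xⱼ δⱼ u` is the sum `R u` of all rotations of `u`, and `C u = R u` is invariant under
rotating `u`, so `∑ⱼ Xⱼ δⱼ (R u) = |u| • R u = N (R u)`. If moreover `F = ∑ⱼ Xⱼ Pⱼ` with every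
`Pⱼ` homogeneous of degree `s`, then `N F = ∑ⱼ Xⱼ ((s + 1) • Pⱼ)`, and the coefficients of
`Xₖ` on the left of `∑ⱼ Xⱼ δⱼ F = ∑ⱼ Xⱼ ((s + 1) • Pⱼ)` must agree. -/

lemma Finset.sum_range_succ_eq_of_apply_eq {M : Type*} [AddCommMonoid M] (g : ℕ → M) {l : ℕ}
    (h : g l = g 0) : ∑ p ∈ Finset.range l, g (p + 1) = ∑ p ∈ Finset.range l, g p := by
  cases l with
  | zero => rfl
  | succ m => rw [Finset.sum_range_succ, Finset.sum_range_succ', h]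

lemma List.sum_range_rotate_add {α M : Type*} [AddCommMonoid M] (f : List α → M) (u : List α)
    (r : ℕ) :
    ∑ p ∈ Finset.range u.length, f (u.rotate (p + r)) =
      ∑ p ∈ Finset.range u.length, f (u.rotate p) := by
  induction r with
  | zero => rfl
  | succ r ih =>
    rw [← ih, ← Finset.sum_range_succ_eq_of_apply_eq (fun p => f (u.rotate (p + r)))]
    · simp only [Nat.add_right_comm _ 1 r, Nat.add_assoc]
    · rw [← List.rotate_rotate, List.rotate_length, Nat.zero_add]

section
omit [CharZero K]

lemma lsum_toSpanSingleton_single (f : FreeMonoid (Fin n) → FreePoly K n)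
    (w : FreeMonoid (Fin n)) :
    ((Finsupp.lsum K fun w => LinearMap.toSpanSingleton K _ (f w)) ∘ₗ
      (MonoidAlgebra.coeffLinearEquiv K).toLinearMap) (MonoidAlgebra.single w 1) = f w := by
  simp

lemma cycDeriv_mono (j : Fin n) (u : List (Fin n)) :
    cycDeriv j (mono K u) = ∑ p : Fin u.length,
      if u.get p = j then mono K (u.drop (p + 1) ++ u.take p) else 0 :=
  lsum_toSpanSingleton_single _ _

lemma numOp_mono (u : List (Fin n)) : numOp (mono K u) = u.length • mono K u :=
  lsum_toSpanSingleton_single _ _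

lemma mono_mul (u v : List (Fin n)) : mono K u * mono K v = mono K (u ++ v) := by
  simp [mono, MonoidAlgebra.single_mul_single, FreeMonoid.ofList_append]

lemma Xvar_mul_mono (j : Fin n) (u : List (Fin n)) : Xvar K j * mono K u = mono K (j :: u) :=
  mono_mul [j] u

lemma of_eq_mono (w : FreeMonoid (Fin n)) :
    MonoidAlgebra.of K (FreeMonoid (Fin n)) w = mono K (FreeMonoid.toList w) := by
  simp [mono, MonoidAlgebra.of_apply]

lemma coeff_Xvar_mul (j k : Fin n) (A : FreePoly K n) (w : FreeMonoid (Fin n)) :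
    (Xvar K j * A).coeff (FreeMonoid.of k * w) = if j = k then A.coeff w else 0 := by
  have hX : Xvar K j = MonoidAlgebra.single (FreeMonoid.of j) 1 := rfl
  split_ifs with hjk
  · subst hjk
    rw [hX, MonoidAlgebra.coeff_single_mul_eq_mul_coeff w fun _ _ => mul_right_inj _, one_mul]
  · rw [hX, MonoidAlgebra.coeff_single_mul_of_forall_mul_ne]
    intro d hd
    exact hjk (List.head_eq_of_cons_eq (congrArg FreeMonoid.toList hd))

lemma sum_Xvar_mul_injective {A B : Fin n → FreePoly K n}
    (h : ∑ j, Xvar K j * A j = ∑ j, Xvar K j * B j) : A = B := by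
  funext k
  ext w
  simpa [MonoidAlgebra.coeff_sum, coeff_Xvar_mul] using
    congrArg (fun F : FreePoly K n => F.coeff (FreeMonoid.of k * w)) h

lemma numOp_Xvar_mul (j : Fin n) (Q : FreePoly K n) :
    numOp (Xvar K j * Q) = Xvar K j * (numOp Q + Q) := by
  induction Q using MonoidAlgebra.induction_on with
  | of w =>
    rw [of_eq_mono, Xvar_mul_mono, numOp_mono, numOp_mono, List.length_cons, succ_nsmul,
      mul_add, mul_smul_comm, Xvar_mul_mono]
  | add F G hF hG =>
    simp only [mul_add, map_add, hF, hG]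
    abel
  | smul c F hF => rw [mul_smul_comm, map_smul, hF, map_smul, ← smul_add, mul_smul_comm]

def rotSum (u : List (Fin n)) : FreePoly K n :=
  ∑ p ∈ Finset.range u.length, mono K (u.rotate p)

lemma rotSum_rotate (u : List (Fin n)) (r : ℕ) : rotSum (K := K) (u.rotate r) = rotSum u := by
  simp only [rotSum, List.length_rotate, List.rotate_rotate, Nat.add_comm r]
  exact List.sum_range_rotate_add _ u r

lemma cycSym_mono (u : List (Fin n)) : cycSym (mono K u) = rotSum u :=
  (lsum_toSpanSingleton_single _ _).trans (List.sum_range_rotate_add _ u 1)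

lemma numOp_rotSum (u : List (Fin n)) : numOp (rotSum (K := K) u) = u.length • rotSum u := by
  simp only [rotSum, map_sum, numOp_mono, List.length_rotate, Finset.smul_sum]

lemma sum_Xvar_mul_cycDeriv_mono (u : List (Fin n)) :
    ∑ j : Fin n, Xvar K j * cycDeriv j (mono K u) = rotSum u := by
  simp only [cycDeriv_mono, Finset.mul_sum, mul_ite, mul_zero]
  rw [Finset.sum_comm, rotSum, ← Fin.sum_univ_eq_sum_range]
  refine Finset.sum_congr rfl fun p _ => ?_
  rw [Finset.sum_ite_eq, if_pos (Finset.mem_univ _), Xvar_mul_mono,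
    List.rotate_eq_drop_append_take p.2.le, List.drop_eq_getElem_cons p.2, List.get_eq_getElem,
    List.cons_append]

lemma sum_Xvar_mul_cycDeriv_rotSum (u : List (Fin n)) :
    ∑ j : Fin n, Xvar K j * cycDeriv j (rotSum u) = numOp (rotSum (K := K) u) := by
  calc ∑ j : Fin n, Xvar K j * cycDeriv j (rotSum u)
      = ∑ p ∈ Finset.range u.length, ∑ j : Fin n, Xvar K j * cycDeriv j (mono K (u.rotate p)) := by
        simp only [rotSum, map_sum, Finset.mul_sum]
        exact Finset.sum_comm
    _ = ∑ p ∈ Finset.range u.length, rotSum (u.rotate p) := by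
        simp only [sum_Xvar_mul_cycDeriv_mono]
    _ = numOp (rotSum u) := by
        simp only [rotSum_rotate, Finset.sum_const, Finset.card_range, numOp_rotSum]

theorem sum_Xvar_mul_cycDeriv_cycSym (G : FreePoly K n) :
    ∑ j : Fin n, Xvar K j * cycDeriv j (cycSym G) = numOp (cycSym G) := by
  induction G using MonoidAlgebra.induction_on with
  | of w => rw [of_eq_mono, cycSym_mono, sum_Xvar_mul_cycDeriv_rotSum]
  | add F G hF hG => simp only [map_add, mul_add, Finset.sum_add_distrib, hF, hG]
  | smul c F hF => simp only [map_smul, mul_smul_comm, ← Finset.smul_sum, hF]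

end

theorem cycDeriv_eq_smul_of_homogeneous_general (P : Fin n → FreePoly K n) (s : ℕ)
    (hhom : ∀ j : Fin n, numOp (P j) = s • P j)
    (h : (∑ j : Fin n, Xvar K j * P j) ∈ LinearMap.range (cycSym (K := K) (n := n))) :
    ∀ k : Fin n, cycDeriv k (∑ j : Fin n, Xvar K j * P j) = (s + 1) • P k := by
  obtain ⟨G, hG⟩ := h
  have euler : ∑ j : Fin n, Xvar K j * cycDeriv j (∑ i : Fin n, Xvar K i * P i) =
      ∑ j : Fin n, Xvar K j * ((s + 1) • P j) := by
    rw [← hG, sum_Xvar_mul_cycDeriv_cycSym, hG, map_sum]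
    simp only [numOp_Xvar_mul, hhom, succ_nsmul]
  exact congrFun (sum_Xvar_mul_injective euler)

theorem cycDeriv_eq_smul_of_homogeneous (P : Fin n → FreePoly K n) (s : ℕ) (hs : 1 ≤ s)
    (hhom : ∀ j : Fin n, numOp (P j) = s • P j)
    (h : (∑ j : Fin n, Xvar K j * P j) ∈ LinearMap.range (cycSym (K := K) (n := n))) :
    ∀ k : Fin n, cycDeriv k (∑ j : Fin n, Xvar K j * P j) = (s + 1) • P k :=
  cycDeriv_eq_smul_of_homogeneous_general P s hhom h
end
end

section
/- A polynomial P ∈ K⟨n⟩ satisfies δ_j P = 0 for all 1 ≤ j ≤ n if and only if P lies in K·1 + [K⟨n⟩, K⟨n⟩], where [K⟨n⟩, K⟨n⟩] denotes the linear span of all commutators [a,b] = ab − ba with a, b ∈ K⟨n⟩. -/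
/-! Each `δ_j` is built from cyclic rotations of words, so `δ_j (a b) = δ_j (b a)` and `δ_j 1 = 0`:
the cyclic derivatives kill `K·1 + [K⟨n⟩, K⟨n⟩]`. Conversely, `∑_j δ_j(P) X_j = C(P)`, the cyclic
symmetrization of `P`. Modulo commutators a word `w = uv` equals its rotation `vu`, so every
nonconstant word is congruent to `|w|⁻¹ C(w)`; hence `P - N⁻¹ C(P) ∈ K·1 + [K⟨n⟩, K⟨n⟩]`, and if
all `δ_j P` vanish then `C(P) = 0`. -/

noncomputable section

variable {K : Type} [Field K] [CharZero K] {n : ℕ}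

section

variable {K : Type} [Field K] {n : ℕ}

theorem lsum_toSpanSingleton_comp_coeffLinearEquiv_single {R M N : Type*} [CommSemiring R]
    [AddCommMonoid N] [Module R N] (f : M → N) (x : M) (c : R) :
    ((Finsupp.lsum R fun w => LinearMap.toSpanSingleton R N (f w)) ∘ₗ
      (MonoidAlgebra.coeffLinearEquiv R).toLinearMap) (MonoidAlgebra.single x c) = c • f x := by
  rw [LinearMap.comp_apply, LinearEquiv.coe_coe, MonoidAlgebra.coeffLinearEquiv_apply,
    MonoidAlgebra.coeff_single, Finsupp.lsum_single, LinearMap.toSpanSingleton_apply]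

theorem mono_nil : mono K ([] : List (Fin n)) = 1 := rfl

theorem mono_append (u v : List (Fin n)) : mono K (u ++ v) = mono K u * mono K v := by
  rw [mono, mono, mono, MonoidAlgebra.single_mul_single, one_mul, FreeMonoid.ofList_append]

theorem single_eq_smul_mono (x : FreeMonoid (Fin n)) (c : K) :
    MonoidAlgebra.single x c = c • mono K x.toList := by
  rw [mono, MonoidAlgebra.smul_single', mul_one, FreeMonoid.ofList_toList]

def cycDerivWord (j : Fin n) (w : List (Fin n)) : FreePoly K n :=
  ∑ p ∈ Finset.range w.length,
    if w[p]? = some j then mono K (w.drop (p + 1) ++ w.take p) else 0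

theorem cycDeriv_mono_s12 (j : Fin n) (w : List (Fin n)) :
    cycDeriv j (mono K w) = cycDerivWord j w := by
  rw [cycDeriv, mono, lsum_toSpanSingleton_comp_coeffLinearEquiv_single, one_smul, cycDerivWord,
    FreeMonoid.toList_ofList, ← Fin.sum_univ_eq_sum_range]
  refine Finset.sum_congr rfl fun p _ => ?_
  simp only [List.get_eq_getElem, List.getElem?_eq_getElem p.isLt, Option.some_inj]

theorem cycDerivWord_cons (j a : Fin n) (t : List (Fin n)) :
    cycDerivWord (K := K) j (a :: t) = cycDerivWord j (t ++ [a]) := by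
  rw [cycDerivWord, cycDerivWord, List.length_cons, List.length_append, List.length_singleton,
    Finset.sum_range_succ', Finset.sum_range_succ]
  congr 1
  · refine Finset.sum_congr rfl fun p hp => ?_
    have hp : p < t.length := Finset.mem_range.mp hp
    rw [List.getElem?_cons_succ, List.getElem?_append_left hp, List.drop_succ_cons,
      List.take_succ_cons, List.drop_append_of_le_length (by omega),
      List.take_append_of_le_length hp.le, List.append_assoc, List.singleton_append]
  · simp

theorem cycDerivWord_append_comm (j : Fin n) (u v : List (Fin n)) :
    cycDerivWord (K := K) j (u ++ v) = cycDerivWord j (v ++ u) := by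
  induction u generalizing v with
  | nil => simp
  | cons a u ih =>
    rw [List.cons_append, cycDerivWord_cons, List.append_assoc, ih, List.append_assoc,
      List.singleton_append]

theorem cycDeriv_mul_comm (j : Fin n) (a b : FreePoly K n) :
    cycDeriv j (a * b) = cycDeriv j (b * a) := by
  induction a using MonoidAlgebra.induction_linear with
  | zero => simp
  | add a a' ha ha' => rw [add_mul, mul_add, map_add, map_add, ha, ha']
  | single x c =>
    induction b using MonoidAlgebra.induction_linear with
    | zero => simp
    | add b b' hb hb' => rw [mul_add, add_mul, map_add, map_add, hb, hb']
    | single y d =>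
      rw [single_eq_smul_mono, single_eq_smul_mono, smul_mul_smul_comm, smul_mul_smul_comm,
        ← mono_append, ← mono_append, map_smul, map_smul, cycDeriv_mono_s12, cycDeriv_mono_s12,
        cycDerivWord_append_comm, mul_comm]

theorem cycDeriv_one (j : Fin n) : cycDeriv j (1 : FreePoly K n) = 0 := by
  rw [← mono_nil, cycDeriv_mono_s12, cycDerivWord, List.length_nil, Finset.sum_range_zero]

variable (K n) in
def commutatorSpan : Submodule K (FreePoly K n) :=
  Submodule.span K {x : FreePoly K n | ∃ a b : FreePoly K n, x = a * b - b * a}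

theorem span_one_sup_commutatorSpan_le_ker_cycDeriv (j : Fin n) :
    Submodule.span K {1} ⊔ commutatorSpan K n ≤ LinearMap.ker (cycDeriv j) := by
  refine sup_le ((Submodule.span_singleton_le_iff_mem _ _).mpr (cycDeriv_one j))
    (Submodule.span_le.mpr ?_)
  rintro _ ⟨a, b, rfl⟩
  rw [SetLike.mem_coe, LinearMap.mem_ker, map_sub, cycDeriv_mul_comm, sub_self]

theorem sum_cycDerivWord_mul_Xvar (w : List (Fin n)) :
    ∑ j, cycDerivWord j w * Xvar K j = ∑ p ∈ Finset.range w.length, mono K (w.rotate (p + 1)) := by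
  simp only [cycDerivWord, Finset.sum_mul, ite_mul, zero_mul]
  rw [Finset.sum_comm]
  refine Finset.sum_congr rfl fun p hp => ?_
  have hp : p < w.length := Finset.mem_range.mp hp
  rw [List.getElem?_eq_getElem hp]
  simp only [Option.some_inj, Finset.sum_ite_eq, Finset.mem_univ, if_true]
  rw [Xvar, ← mono_append, List.append_assoc, List.rotate_eq_drop_append_take hp,
    List.take_succ_eq_append_getElem hp]

theorem cycSym_mono_s12 (w : List (Fin n)) :
    cycSym (mono K w) = ∑ p ∈ Finset.range w.length, mono K (w.rotate (p + 1)) := by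
  rw [cycSym, mono, lsum_toSpanSingleton_comp_coeffLinearEquiv_single, one_smul,
    FreeMonoid.toList_ofList]

theorem sum_cycDeriv_mul_Xvar (P : FreePoly K n) : ∑ j, cycDeriv j P * Xvar K j = cycSym P := by
  induction P using MonoidAlgebra.induction_linear with
  | zero => simp
  | add P Q hP hQ => simp only [map_add, add_mul, Finset.sum_add_distrib, hP, hQ]
  | single x c =>
    simp only [single_eq_smul_mono, map_smul, smul_mul_assoc, ← Finset.smul_sum, cycDeriv_mono_s12,
      sum_cycDerivWord_mul_Xvar, cycSym_mono_s12]

/-- Inverse of `numOp` on nonconstant monomials; as `(0 : K)⁻¹ = 0`, it kills the constants. -/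
def invNumOp : FreePoly K n →ₗ[K] FreePoly K n :=
  (Finsupp.lsum K fun w => LinearMap.toSpanSingleton K _
    (((FreeMonoid.toList w).length : K)⁻¹ • mono K (FreeMonoid.toList w))) ∘ₗ
    (MonoidAlgebra.coeffLinearEquiv K).toLinearMap

theorem invNumOp_mono (w : List (Fin n)) : invNumOp (mono K w) = (w.length : K)⁻¹ • mono K w :=
  (lsum_toSpanSingleton_comp_coeffLinearEquiv_single _ _ _).trans (one_smul K _)

theorem mono_sub_mono_rotate_mem_commutatorSpan (w : List (Fin n)) {k : ℕ} (hk : k ≤ w.length) :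
    mono K w - mono K (w.rotate k) ∈ commutatorSpan K n := by
  refine Submodule.subset_span ⟨mono K (w.take k), mono K (w.drop k), ?_⟩
  rw [← mono_append, ← mono_append, List.take_append_drop, List.rotate_eq_drop_append_take hk]

end

theorem mono_sub_invNumOp_cycSym_mono_mem (w : List (Fin n)) :
    mono K w - invNumOp (cycSym (mono K w)) ∈ Submodule.span K {1} ⊔ commutatorSpan K n := by
  cases w with
  | nil =>
    rw [cycSym_mono_s12, List.length_nil, Finset.sum_range_zero, map_zero, sub_zero, mono_nil]
    exact Submodule.mem_sup_left (Submodule.mem_span_singleton_self 1)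
  | cons a t =>
    set w := a :: t
    have hw : (w.length : K) ≠ 0 := by simp [w, Nat.cast_add_one_ne_zero]
    have hrot : mono K w - invNumOp (cycSym (mono K w)) =
        (w.length : K)⁻¹ • ∑ p ∈ Finset.range w.length, (mono K w - mono K (w.rotate (p + 1))) := by
      simp only [cycSym_mono_s12, map_sum, invNumOp_mono, List.length_rotate]
      rw [← Finset.smul_sum, Finset.sum_sub_distrib, smul_sub, Finset.sum_const, Finset.card_range,
        ← Nat.cast_smul_eq_nsmul K, smul_smul, inv_mul_cancel₀ hw, one_smul]
    rw [hrot]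
    refine Submodule.mem_sup_right (Submodule.smul_mem _ _ (Submodule.sum_mem _ fun p hp => ?_))
    exact mono_sub_mono_rotate_mem_commutatorSpan w (Finset.mem_range.mp hp)

theorem sub_invNumOp_cycSym_mem (P : FreePoly K n) :
    P - invNumOp (cycSym P) ∈ Submodule.span K {1} ⊔ commutatorSpan K n := by
  induction P using MonoidAlgebra.induction_linear with
  | zero => simp
  | add P Q hP hQ =>
    rw [map_add, map_add, add_sub_add_comm]
    exact add_mem hP hQ
  | single x c =>
    rw [single_eq_smul_mono, map_smul, map_smul, ← smul_sub]
    exact Submodule.smul_mem _ c (mono_sub_invNumOp_cycSym_mono_mem _)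

theorem cycDeriv_eq_zero_iff_mem_scalars_sup_commutators (P : FreePoly K n) :
    (∀ j : Fin n, cycDeriv j P = 0) ↔
      P ∈ Submodule.span K {(1 : FreePoly K n)} ⊔
        Submodule.span K {x : FreePoly K n | ∃ a b : FreePoly K n, x = a * b - b * a} := by
  refine ⟨fun h => ?_, fun hP j => span_one_sup_commutatorSpan_le_ker_cycDeriv j hP⟩
  have hC : cycSym P = 0 := by simp [← sum_cycDeriv_mul_Xvar, h]
  have hP := sub_invNumOp_cycSym_mem P
  rwa [hC, map_zero, sub_zero] at hP
end
end
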